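/- The state (i, x₁) = (0, 0) is an unstable equilibrium of the epidemic-behavior co-evolution system: the determinant of the Jacobian at (0,0) equals −γ·k₀·(u(c₁) − u(c₂)) < 0. -/

import Mathlib

/-- Prelec weighting function extended by ω(0) = 0. -/
noncomputable def prelec0 (α p : ℝ) : ℝ :=
  if p = 0 then 0 else Real.exp (-((-Real.log p) ^ α))

/-- di/dt of the epidemic-behavior co-evolution system (with β₂ = 0). -/
noncomputable def F1 (γ kβ₁ i x : ℝ) : ℝ := i * (1 - i) * kβ₁ * x - γ * i

/-- dx₁/dt of the epidemic-behavior co-evolution system. -/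
noncomputable def F2 (α k₀ kβ₁ ucn uc1 uc2 i x : ℝ) : ℝ :=
  x * (1 - x) * (-(kβ₁ * i) + k₀ * (ucn * prelec0 α (kβ₁ * i) + uc1 - uc2))

/-! At the origin the Jacobian is upper triangular: its entry `∂F1/∂x = i(1-i)kβ₁` vanishes
at `i = 0`. Its determinant is therefore the product of the diagonal entries, `-γ` and
`k₀ (u(c₁) - u(c₂))`, the latter because `ω(0) = 0` removes the loss term. -/

lemma prelec0_zero (α : ℝ) : prelec0 α 0 = 0 := if_pos rfl

lemma hasDerivAt_F1_fst (γ kβ₁ i x : ℝ) :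
    HasDerivAt (fun i => F1 γ kβ₁ i x) ((1 - 2 * i) * kβ₁ * x - γ) i :=
  (((((hasDerivAt_id' i).mul ((hasDerivAt_id' i).const_sub 1)).mul_const kβ₁).mul_const x).sub
    ((hasDerivAt_id' i).const_mul γ)).congr_deriv (by ring)

lemma hasDerivAt_F1_snd (γ kβ₁ i x : ℝ) :
    HasDerivAt (fun x => F1 γ kβ₁ i x) (i * (1 - i) * kβ₁) x :=
  (((hasDerivAt_id' x).const_mul (i * (1 - i) * kβ₁)).sub_const (γ * i)).congr_deriv (by ring)

lemma hasDerivAt_F2_snd (α k₀ kβ₁ ucn uc1 uc2 i x : ℝ) :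
    HasDerivAt (fun x => F2 α k₀ kβ₁ ucn uc1 uc2 i x)
      ((1 - 2 * x) * (-(kβ₁ * i) + k₀ * (ucn * prelec0 α (kβ₁ * i) + uc1 - uc2))) x :=
  (((hasDerivAt_id' x).mul ((hasDerivAt_id' x).const_sub 1)).mul_const
    (-(kβ₁ * i) + k₀ * (ucn * prelec0 α (kβ₁ * i) + uc1 - uc2))).congr_deriv (by ring)

theorem stmt10_general (α γ k₀ kβ₁ ucn uc1 uc2 : ℝ)
    (hγ : 0 < γ) (hk₀ : 0 < k₀) (hΔ : 0 < uc1 - uc2) :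
    deriv (fun i => F1 γ kβ₁ i 0) 0 * deriv (fun x => F2 α k₀ kβ₁ ucn uc1 uc2 0 x) 0
      - deriv (fun x => F1 γ kβ₁ 0 x) 0 * deriv (fun i => F2 α k₀ kβ₁ ucn uc1 uc2 i 0) 0
      = -γ * k₀ * (uc1 - uc2) ∧
    -γ * k₀ * (uc1 - uc2) < 0 := by
  constructor
  · rw [(hasDerivAt_F1_fst γ kβ₁ 0 0).deriv, (hasDerivAt_F2_snd α k₀ kβ₁ ucn uc1 uc2 0 0).deriv,
      (hasDerivAt_F1_snd γ kβ₁ 0 0).deriv, mul_zero kβ₁, prelec0_zero]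
    ring
  · have := mul_pos (mul_pos hγ hk₀) hΔ
    linarith

/-- The state (0,0) is an unstable equilibrium: the Jacobian determinant at
(0,0) equals −γ·k₀·(u(c₁)−u(c₂)) < 0. -/
theorem stmt10 (α γ k₀ kβ₁ ucn uc1 uc2 : ℝ)
    (hα : 0 < α) (hα1 : α ≤ 1) (hγ : 0 < γ) (hk₀ : 0 < k₀) (hkβ : 0 < kβ₁)
    (hucn : ucn < 0) (hΔ : 0 < uc1 - uc2) :
    deriv (fun i => F1 γ kβ₁ i 0) 0 * deriv (fun x => F2 α k₀ kβ₁ ucn uc1 uc2 0 x) 0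
      - deriv (fun x => F1 γ kβ₁ 0 x) 0 * deriv (fun i => F2 α k₀ kβ₁ ucn uc1 uc2 i 0) 0
      = -γ * k₀ * (uc1 - uc2) ∧
    -γ * k₀ * (uc1 - uc2) < 0 :=
  stmt10_general α γ k₀ kβ₁ ucn uc1 uc2 hγ hk₀ hΔ
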